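/- For any a ≥ 2 and b ∈ ℕ, the cyclic Ramsey number of the monotone cycle of order a versus the monotone path of order b equals 1 + (a−1)(b−1). -/

import Mathlib

open SimpleGraph Finset

/-- A symmetric `k`-edge-coloring `χ` of the complete graph on `Fin n` contains a copy of `H`
in color `j` via a strictly increasing embedding. -/
def ContainsOrd {m n k : ℕ} (H : SimpleGraph (Fin m))
    (χ : Fin n → Fin n → Fin k) (j : Fin k) : Prop :=
  ∃ φ : Fin m → Fin n, StrictMono φ ∧ ∀ u v : Fin m, H.Adj u v → χ (φ u) (φ v) = j

/-- Contains a copy via an embedding that is increasing up to a cyclic permutation. -/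
def ContainsCyc {m n k : ℕ} (H : SimpleGraph (Fin m))
    (χ : Fin n → Fin n → Fin k) (j : Fin k) : Prop :=
  ∃ φ : Fin m → Fin n, (∃ t : Fin m, StrictMono fun i : Fin m => φ (i + t)) ∧
    ∀ u v : Fin m, H.Adj u v → χ (φ u) (φ v) = j

/-- Contains a copy via an arbitrary injective embedding. -/
def ContainsStd {m n k : ℕ} (H : SimpleGraph (Fin m))
    (χ : Fin n → Fin n → Fin k) (j : Fin k) : Prop :=
  ∃ φ : Fin m → Fin n, Function.Injective φ ∧ ∀ u v : Fin m, H.Adj u v → χ (φ u) (φ v) = j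

/-- The ordered Ramsey number of a family of graphs. -/
noncomputable def Rord {k : ℕ} (m : Fin k → ℕ) (H : ∀ j, SimpleGraph (Fin (m j))) : ℕ :=
  sInf {n | ∀ χ : Fin n → Fin n → Fin k, (∀ u v, χ u v = χ v u) → ∃ j, ContainsOrd (H j) χ j}

/-- The cyclic Ramsey number of a family of graphs. -/
noncomputable def Rcyc {k : ℕ} (m : Fin k → ℕ) (H : ∀ j, SimpleGraph (Fin (m j))) : ℕ :=
  sInf {n | ∀ χ : Fin n → Fin n → Fin k, (∀ u v, χ u v = χ v u) → ∃ j, ContainsCyc (H j) χ j}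

/-- The standard Ramsey number of a family of graphs. -/
noncomputable def Rstd {k : ℕ} (m : Fin k → ℕ) (H : ∀ j, SimpleGraph (Fin (m j))) : ℕ :=
  sInf {n | ∀ χ : Fin n → Fin n → Fin k, (∀ u v, χ u v = χ v u) → ∃ j, ContainsStd (H j) χ j}

/-- The two-color ordered Ramsey number. -/
noncomputable def Rord2 {a b : ℕ} (H₁ : SimpleGraph (Fin a)) (H₂ : SimpleGraph (Fin b)) : ℕ :=
  sInf {n | ∀ χ : Fin n → Fin n → Fin 2, (∀ u v, χ u v = χ v u) →
    ContainsOrd H₁ χ 0 ∨ ContainsOrd H₂ χ 1}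

/-- The two-color cyclic Ramsey number. -/
noncomputable def Rcyc2 {a b : ℕ} (H₁ : SimpleGraph (Fin a)) (H₂ : SimpleGraph (Fin b)) : ℕ :=
  sInf {n | ∀ χ : Fin n → Fin n → Fin 2, (∀ u v, χ u v = χ v u) →
    ContainsCyc H₁ χ 0 ∨ ContainsCyc H₂ χ 1}

/-- The monotone path of order `n`. -/
def monPath (n : ℕ) : SimpleGraph (Fin n) :=
  SimpleGraph.fromRel fun u v => (u : ℕ) + 1 = (v : ℕ)

/-- The monotone cycle of order `n`. -/
def monCycle (n : ℕ) : SimpleGraph (Fin n) :=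
  SimpleGraph.fromRel fun u v => (u : ℕ) + 1 = (v : ℕ) ∨ ((u : ℕ) = 0 ∧ (v : ℕ) = n - 1)

/-- The start-central star of order `n` (center `0`). -/
def starSC (n : ℕ) : SimpleGraph (Fin n) :=
  SimpleGraph.fromRel fun u _ => (u : ℕ) = 0

/-- The star of order `n` with center `c`. -/
def starG (n : ℕ) (c : Fin n) : SimpleGraph (Fin n) :=
  SimpleGraph.fromRel fun u _ => u = c

/-- The nested matching of order `n`. -/
def nestedMatching (n : ℕ) : SimpleGraph (Fin n) :=
  SimpleGraph.fromRel fun u v => (u : ℕ) + (v : ℕ) = n - 1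

/-- Rotational isomorphism of two graphs on `Fin m`. -/
def RotIso {m : ℕ} (G₁ G₂ : SimpleGraph (Fin m)) : Prop :=
  ∃ s : Fin m, ∀ u v : Fin m, G₁.Adj u v ↔ G₂.Adj (u + s) (v + s)

/-!
Upper bound: label each vertex by the number of edges of the longest increasing color-`1` path
ending there. A color-`1` edge strictly increases the label, so if no label reaches `b - 1`, then
`a` of the more than `(a - 1)(b - 1)` vertices share a label and span a color-`0` clique, which
contains every graph on `a` ordered vertices.

Lower bound: split `(a - 1)(b - 1)` vertices into `a - 1` consecutive blocks of `b - 1`, with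
color `1` inside blocks and color `0` between them. A color-`1` path stays in one block, which is
too small; a cyclically increasing color-`0` cycle, read from its smallest vertex, is an increasing
color-`0` path on `a` vertices, which has to visit `a` different blocks.
-/

section Containment

variable {m n k : ℕ} {H : SimpleGraph (Fin m)} {χ : Fin n → Fin n → Fin k} {j : Fin k}

theorem ContainsOrd.containsCyc (hm : 0 < m) (h : ContainsOrd H χ j) : ContainsCyc H χ j := by
  have : NeZero m := ⟨hm.ne'⟩
  obtain ⟨φ, hφ, hcol⟩ := h
  exact ⟨φ, ⟨0, by simpa using hφ⟩, hcol⟩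

theorem ContainsCyc.containsStd (h : ContainsCyc H χ j) : ContainsStd H χ j := by
  obtain ⟨φ, ⟨t, hψ⟩, hcol⟩ := h
  have : NeZero m := ⟨t.pos.ne'⟩
  exact ⟨φ, hψ.injective.of_comp_right (add_right_surjective t), hcol⟩

theorem ContainsStd.card_le (h : ContainsStd H χ j) : m ≤ n := by
  obtain ⟨φ, hφ, -⟩ := h
  simpa using Fintype.card_le_of_injective φ hφ

end Containment

theorem monPath_adj_castSucc_succ {b : ℕ} (i : Fin b) : (monPath (b + 1)).Adj i.castSucc i.succ :=
  (fromRel_adj _ _ _).2 ⟨(Fin.castSucc_lt_succ).ne, Or.inl (by simp)⟩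

theorem monCycle_adj_of_succ_mod {a : ℕ} (ha : 2 ≤ a) {u v : Fin a}
    (h : ((u : ℕ) + 1) % a = v) : (monCycle a).Adj u v := by
  have hcases : (u : ℕ) + 1 = v ∨ ((v : ℕ) = 0 ∧ (u : ℕ) = a - 1) := by
    rcases Nat.lt_or_ge ((u : ℕ) + 1) a with hlt | hge
    · rw [Nat.mod_eq_of_lt hlt] at h; exact Or.inl h
    · rw [show (u : ℕ) + 1 = a by omega, Nat.mod_self] at h; exact Or.inr ⟨h.symm, by omega⟩
  refine (fromRel_adj _ _ _).2 ⟨fun huv => by subst huv; omega, ?_⟩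
  rcases hcases with h | h
  exacts [Or.inl (Or.inl h), Or.inr (Or.inr h)]

theorem ContainsCyc.containsOrd_monPath {a n k : ℕ} {χ : Fin n → Fin n → Fin k} {j : Fin k}
    (ha : 2 ≤ a) (h : ContainsCyc (monCycle a) χ j) : ContainsOrd (monPath a) χ j := by
  obtain ⟨φ, ⟨t, hψ⟩, hcol⟩ := h
  have hstep : ∀ u v : Fin a, (u : ℕ) + 1 = v → (monCycle a).Adj (u + t) (v + t) := by
    intro u v h
    apply monCycle_adj_of_succ_mod ha
    rw [Fin.val_add, Fin.val_add, ← h, Nat.mod_add_mod, Nat.add_right_comm]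
  refine ⟨fun i => φ (i + t), hψ, fun u v huv => hcol _ _ ?_⟩
  rcases (fromRel_adj _ _ _).1 huv with ⟨-, h | h⟩
  exacts [hstep u v h, (hstep v u h).symm]

def blockColoring (c m : ℕ) (u v : Fin m) : Fin 2 :=
  if (u : ℕ) / c = (v : ℕ) / c then 1 else 0

section BlockColoring

variable {c m : ℕ}

theorem blockColoring_symm (u v : Fin m) : blockColoring c m u v = blockColoring c m v u := by
  simp only [blockColoring, eq_comm]

theorem blockColoring_eq_zero_iff {u v : Fin m} :
    blockColoring c m u v = 0 ↔ (u : ℕ) / c ≠ (v : ℕ) / c := by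
  unfold blockColoring; split_ifs <;> simp_all

theorem blockColoring_eq_one_iff {u v : Fin m} :
    blockColoring c m u v = 1 ↔ (u : ℕ) / c = (v : ℕ) / c := by
  unfold blockColoring; split_ifs <;> simp_all

theorem blockColoring_not_containsOrd_monPath {a : ℕ} (ha : 0 < a) (hm : m ≤ (a - 1) * c) :
    ¬ ContainsOrd (monPath a) (blockColoring c m) 0 := by
  obtain ⟨a, rfl⟩ := Nat.exists_eq_add_one_of_ne_zero ha.ne'
  rintro ⟨ψ, hψ, hcol⟩
  have hgrow : ∀ i : Fin (a + 1), (i : ℕ) ≤ (ψ i : ℕ) / c := by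
    refine Fin.induction (Nat.zero_le _) fun i ih => ?_
    have hne := blockColoring_eq_zero_iff.1 (hcol _ _ (monPath_adj_castSucc_succ i))
    have hle := Nat.div_le_div_right (c := c) (hψ (Fin.castSucc_lt_succ (i := i))).le
    simp only [Fin.val_succ, Fin.val_castSucc] at ih hne hle ⊢
    omega
  have hlast := hgrow (Fin.last a)
  have hlt : (ψ (Fin.last a) : ℕ) < a * c := by
    have := (ψ (Fin.last a)).isLt; simp only [Nat.add_sub_cancel] at hm; omega
  have hc : 0 < c := Nat.pos_of_ne_zero fun h => by simp [h] at hlt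
  have := (Nat.div_lt_iff_lt_mul hc).2 hlt
  simp only [Fin.val_last] at hlast
  omega

theorem ContainsStd.le_of_blockColoring {b : ℕ} (hc : 0 < c)
    (h : ContainsStd (monPath b) (blockColoring c m) 1) : b ≤ c := by
  obtain ⟨φ, hφ, hcol⟩ := h
  rcases Nat.eq_zero_or_pos b with rfl | hb
  · exact Nat.zero_le _
  obtain ⟨b, rfl⟩ := Nat.exists_eq_add_one_of_ne_zero hb.ne'
  have hblock : ∀ i, (φ i : ℕ) / c = (φ 0 : ℕ) / c := by
    refine Fin.induction rfl fun i ih => ?_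
    rw [← ih]
    exact (blockColoring_eq_one_iff.1 (hcol _ _ (monPath_adj_castSucc_succ i))).symm
  have hmod : Function.Injective fun i => (⟨(φ i : ℕ) % c, Nat.mod_lt _ hc⟩ : Fin c) := by
    intro i j hij
    apply hφ
    apply Fin.ext
    rw [← Nat.div_add_mod (φ i) c, ← Nat.div_add_mod (φ j) c, hblock i, hblock j]
    simp only [Fin.mk.injEq] at hij
    rw [hij]
  simpa using Fintype.card_le_of_injective _ hmod

end BlockColoring

section LongestPath

variable {n k : ℕ} (χ : Fin n → Fin n → Fin k) (j : Fin k)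

def incPathLengths (v : Fin n) : Set ℕ :=
  {ℓ | ∃ φ : Fin (ℓ + 1) → Fin n, StrictMono φ ∧ φ (Fin.last ℓ) = v ∧
    ∀ i : Fin ℓ, χ (φ i.castSucc) (φ i.succ) = j}

noncomputable def longestIncPath (v : Fin n) : ℕ :=
  sSup (incPathLengths χ j v)

variable {χ j}

theorem zero_mem_incPathLengths (v : Fin n) : 0 ∈ incPathLengths χ j v :=
  ⟨fun _ => v, Fin.strictMono_iff_lt_succ.2 fun i => i.elim0, rfl, Fin.elim0⟩

theorem bddAbove_incPathLengths (v : Fin n) : BddAbove (incPathLengths χ j v) := by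
  refine ⟨n, fun ℓ ⟨φ, hφ, _⟩ => ?_⟩
  have := Fintype.card_le_of_injective φ hφ.injective
  simp only [Fintype.card_fin] at this
  omega

theorem succ_mem_incPathLengths {u v : Fin n} (huv : u < v) (h : χ u v = j) {ℓ : ℕ}
    (hℓ : ℓ ∈ incPathLengths χ j u) : ℓ + 1 ∈ incPathLengths χ j v := by
  obtain ⟨φ, hφ, hlast, hcol⟩ := hℓ
  refine ⟨Fin.snoc φ v, Fin.strictMono_iff_lt_succ.2 fun i => ?_, Fin.snoc_last _ _, fun i => ?_⟩
  · refine Fin.lastCases ?_ (fun i => ?_) i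
    · simpa [hlast] using huv
    · simpa only [Fin.succ_castSucc, Fin.snoc_castSucc] using hφ (Fin.castSucc_lt_succ (i := i))
  · refine Fin.lastCases ?_ (fun i => ?_) i
    · simpa [hlast] using h
    · simpa only [Fin.succ_castSucc, Fin.snoc_castSucc] using hcol i

theorem longestIncPath_mem (v : Fin n) : longestIncPath χ j v ∈ incPathLengths χ j v :=
  Nat.sSup_mem ⟨0, zero_mem_incPathLengths v⟩ (bddAbove_incPathLengths v)

theorem longestIncPath_lt {u v : Fin n} (huv : u < v) (h : χ u v = j) :
    longestIncPath χ j u < longestIncPath χ j v :=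
  Nat.lt_of_succ_le <| le_csSup (bddAbove_incPathLengths v)
    (succ_mem_incPathLengths huv h (longestIncPath_mem u))

theorem containsOrd_monPath_of_le_longestIncPath (hsym : ∀ u v, χ u v = χ v u) {b : ℕ}
    {v : Fin n} (hb : b ≤ longestIncPath χ j v + 1) : ContainsOrd (monPath b) χ j := by
  obtain ⟨φ, hφ, -, hcol⟩ := longestIncPath_mem (χ := χ) (j := j) v
  have hstep : ∀ x y : Fin b, (x : ℕ) + 1 = y →
      χ (φ (Fin.castLE hb x)) (φ (Fin.castLE hb y)) = j := by
    intro x y hxy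
    convert hcol ⟨x, by omega⟩ using 3 <;> ext <;> simp [hxy]
  refine ⟨φ ∘ Fin.castLE hb, hφ.comp (Fin.strictMono_castLE hb), fun x y hxy => ?_⟩
  rcases (fromRel_adj _ _ _).1 hxy with ⟨-, h | h⟩
  exacts [hstep x y h, (hsym _ _).trans (hstep y x h)]

end LongestPath

theorem containsOrd_of_card_eq {m n k : ℕ} (H : SimpleGraph (Fin m))
    {χ : Fin n → Fin n → Fin k} {j : Fin k} (S : Finset (Fin n)) (hS : S.card = m)
    (hcol : ∀ u ∈ S, ∀ v ∈ S, u ≠ v → χ u v = j) : ContainsOrd H χ j := by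
  refine ⟨S.orderEmbOfFin hS, (S.orderEmbOfFin hS).strictMono, fun u v huv => ?_⟩
  exact hcol _ (S.orderEmbOfFin_mem hS u) _ (S.orderEmbOfFin_mem hS v)
    ((S.orderEmbOfFin hS).injective.ne huv.ne)

theorem containsOrd_or_containsOrd_monPath {a b n : ℕ} (H : SimpleGraph (Fin a))
    {χ : Fin n → Fin n → Fin 2} (hsym : ∀ u v, χ u v = χ v u) (hn : (a - 1) * (b - 1) < n) :
    ContainsOrd H χ 0 ∨ ContainsOrd (monPath b) χ 1 := by
  by_cases hlong : ∃ v, b ≤ longestIncPath χ 1 v + 1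
  · obtain ⟨v, hv⟩ := hlong
    exact Or.inr (containsOrd_monPath_of_le_longestIncPath hsym hv)
  push Not at hlong
  left
  obtain ⟨y, hy⟩ := Fintype.exists_lt_card_fiber_of_mul_lt_card (n := a - 1)
    (fun v => (⟨longestIncPath χ 1 v, by have := hlong v; omega⟩ : Fin (b - 1)))
    (by simpa [mul_comm] using hn)
  obtain ⟨S, hSy, hS⟩ := Finset.exists_subset_card_eq (Nat.le_of_pred_lt hy)
  have hfiber : ∀ u ∈ S, longestIncPath χ 1 u = y := fun u hu => by
    simpa [Fin.ext_iff] using (Finset.mem_filter.1 (hSy hu)).2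
  have hcol : ∀ u ∈ S, ∀ v ∈ S, u < v → χ u v = 0 := fun u hu v hv huv => by
    by_contra hne
    have := longestIncPath_lt huv (show χ u v = 1 by omega)
    rw [hfiber u hu, hfiber v hv] at this
    exact this.false
  refine containsOrd_of_card_eq H S hS fun u hu v hv huv => ?_
  rcases huv.lt_or_gt with h | h
  exacts [hcol u hu v hv h, (hsym u v).trans (hcol v hv u hu h)]

theorem exists_coloring_not_containsCyc {a b m : ℕ} (ha : 2 ≤ a) (hb : 1 ≤ b)
    (hm : m ≤ (a - 1) * (b - 1)) :
    ∃ χ : Fin m → Fin m → Fin 2, (∀ u v, χ u v = χ v u) ∧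
      ¬ ContainsCyc (monCycle a) χ 0 ∧ ¬ ContainsCyc (monPath b) χ 1 := by
  refine ⟨blockColoring (b - 1) m, blockColoring_symm, fun h => ?_, fun h => ?_⟩
  · exact blockColoring_not_containsOrd_monPath (by omega) hm (h.containsOrd_monPath ha)
  · rcases Nat.eq_zero_or_pos (b - 1) with hc | hc
    · have := h.containsStd.card_le
      simp only [hc, mul_zero] at hm
      omega
    · have := h.containsStd.le_of_blockColoring hc
      omega

theorem stmt9 (a b : ℕ) (ha : 2 ≤ a) (hb : 1 ≤ b) :
    Rcyc2 (monCycle a) (monPath b) = 1 + (a - 1) * (b - 1) := by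
  have hupper : 1 + (a - 1) * (b - 1) ∈ {n | ∀ χ : Fin n → Fin n → Fin 2,
      (∀ u v, χ u v = χ v u) → ContainsCyc (monCycle a) χ 0 ∨ ContainsCyc (monPath b) χ 1} :=
    fun χ hsym => (containsOrd_or_containsOrd_monPath _ hsym (by omega)).imp
      (·.containsCyc (by omega)) (·.containsCyc (by omega))
  refine le_antisymm (Nat.sInf_le hupper) (le_csInf ⟨_, hupper⟩ fun m hm => ?_)
  by_contra! hlt
  obtain ⟨χ, hsym, hcyc, hpath⟩ := exists_coloring_not_containsCyc ha hb (m := m) (by omega)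
  exact (hm χ hsym).elim hcyc hpath
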